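/- Let ω > 0 and h ∈ ℝ satisfy |h|·ω < π, and set q = sin(hω)/ω and rₕ = −ω · tan(hω/2). Then the exact flow matrix factorizes into three shears: !![cos(hω), sin(hω)/ω; −ω·sin(hω), cos(hω)] = !![1, 0; rₕ, 1] * !![1, q; 0, 1] * !![1, 0; rₕ, 1]. -/

import Mathlib

/-!
With `t = tan (hω / 2)`, the tangent half-angle substitution `cos (hω) = (1 - t²) / (1 + t²)`,
`sin (hω) = 2 t / (1 + t²)` turns both sides into the same rational functions of `t` and `ω`.
The cosine substitution needs `cos (hω) ≠ -1`, which `|h| ω < π` guarantees.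
-/

open Matrix

theorem lowerShear_mul_upperShear_mul_lowerShear {R : Type*} [CommRing R] (q r : R) :
    !![1, 0; r, 1] * !![1, q; 0, 1] * !![1, 0; r, 1] =
      !![1 + q * r, q; r * (2 + q * r), 1 + q * r] := by
  rw [mul_fin_two, mul_fin_two]
  ext i j
  fin_cases i <;> fin_cases j <;> simp <;> ring

namespace Real

theorem neg_one_lt_cos_of_abs_lt_pi {x : ℝ} (hx : |x| < π) : -1 < cos x := by
  rw [← cos_abs, ← cos_pi]
  exact cos_lt_cos_of_nonneg_of_le_pi (abs_nonneg x) le_rfl hx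

end Real

/-- Three-shear factorization of the harmonic-oscillator flow matrix,
valid when `|h| ω < π`. -/
theorem shear_factorization_trigonometric (ω h : ℝ) (hω : 0 < ω)
    (hcond : |h| * ω < Real.pi)
    (q rh : ℝ)
    (hq : q = Real.sin (h * ω) / ω)
    (hr : rh = -(ω * Real.tan (h * ω / 2))) :
    !![Real.cos (h * ω), Real.sin (h * ω) / ω;
       -(ω * Real.sin (h * ω)), Real.cos (h * ω)] =
      !![(1:ℝ), 0; rh, 1] * !![(1:ℝ), q; 0, 1] * !![(1:ℝ), 0; rh, 1] := by
  have hcos : Real.cos (h * ω) ≠ -1 :=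
    (Real.neg_one_lt_cos_of_abs_lt_pi (by rwa [abs_mul, abs_of_pos hω])).ne'
  rw [lowerShear_mul_upperShear_mul_lowerShear, hq, hr,
    Real.cos_eq_two_mul_tan_half_div_one_sub_tan_half_sq _ hcos,
    Real.sin_eq_two_mul_tan_half_div_one_add_tan_half_sq]
  generalize Real.tan (h * ω / 2) = t
  ext i j
  fin_cases i <;> fin_cases j <;> simp <;> field_simp <;> ring
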